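/- arXiv:1507.00380 — 4 statements merged into one kernel-verified Lean document; each statement's English description precedes it below -/
import Mathlib

section
/- Let I_C ⊆ R be a saturated homogeneous ideal of height c, let I_S ⊆ I_C be a homogeneous ideal such that R/I_S is Cohen–Macaulay of height c−1, and let f ∈ R be a homogeneous form of degree d that is a nonzerodivisor on R/I_S. Set I = f·I_C + I_S. Then there is an exact sequence of graded R-modules 0 → I_S(−d) → I_C(−d) ⊕ I_S → I → 0, where the first map sends g ↦ (g, f·g) and the second map sends (a,b) ↦ f·a − b. -/
open MvPolynomial CategoryTheory

noncomputable section

/-- The height of an ideal: the infimum of the heights of the prime ideals containing it. -/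
noncomputable def idealHeight {A : Type*} [CommRing A] (I : Ideal A) : ℕ∞ :=
  ⨅ P ∈ {P : PrimeSpectrum A | I ≤ P.asIdeal}, Order.height P

/-- The depth of a module `M` with respect to an ideal `J`: the supremum of the lengths of
`M`-regular sequences consisting of elements of `J`. -/
noncomputable def idealDepth {A : Type*} [CommRing A] (J : Ideal A)
    (M : Type*) [AddCommGroup M] [Module A M] : ℕ∞ :=
  sSup {n : ℕ∞ | ∃ rs : List A, (rs.length : ℕ∞) = n ∧ (∀ r ∈ rs, r ∈ J) ∧
    RingTheory.Sequence.IsRegular M rs}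

/-- The irrelevant maximal ideal `(x_i : i ∈ σ)` of the polynomial ring `k[x_i : i ∈ σ]`. -/
def irrelevantIdeal (k : Type) [Field k] (σ : Type) : Ideal (MvPolynomial σ k) :=
  Ideal.span (Set.range (X : σ → MvPolynomial σ k))

/-- The quotient of a polynomial ring by an ideal `I` is Cohen–Macaulay if its depth with
respect to the irrelevant maximal ideal equals its Krull dimension. -/
def IsCMQuotient {k : Type} [Field k] {σ : Type} (I : Ideal (MvPolynomial σ k)) : Prop :=
  (idealDepth (irrelevantIdeal k σ) (MvPolynomial σ k ⧸ I) : WithBot ℕ∞)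
    = ringKrullDim (MvPolynomial σ k ⧸ I)

/-- An ideal of a polynomial ring is homogeneous if it contains all homogeneous components
of each of its elements. -/
def IsHomogeneousIdeal {k : Type} [Field k] {σ : Type} (I : Ideal (MvPolynomial σ k)) : Prop :=
  ∀ p ∈ I, ∀ i : ℕ, homogeneousComponent i p ∈ I

/-- The Hilbert function of `R/I`, `t ↦ dim_k [R/I]_t`, as a function `ℤ → ℤ`
(equal to `0` in negative degrees). -/
noncomputable def hilbertFn (k : Type) [Field k] {σ : Type} (I : Ideal (MvPolynomial σ k))
    (t : ℤ) : ℤ :=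
  if t < 0 then 0
  else
    (Module.finrank k (homogeneousSubmodule σ k t.toNat) : ℤ) -
    (Module.finrank k
      ((Submodule.restrictScalars k (I : Submodule (MvPolynomial σ k) (MvPolynomial σ k))) ⊓
        homogeneousSubmodule σ k t.toNat : Submodule k (MvPolynomial σ k)) : ℤ)

/-- `P` is the Hilbert polynomial of `R/I` if it agrees with the Hilbert function of `R/I`
in all sufficiently large degrees. -/
def IsHilbertPolyOf (k : Type) [Field k] {σ : Type} (I : Ideal (MvPolynomial σ k))
    (P : Polynomial ℚ) : Prop :=
  ∃ N : ℤ, ∀ t : ℤ, N ≤ t → (hilbertFn k I t : ℚ) = P.eval (t : ℚ)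

open Classical in
/-- The Hilbert polynomial of `R/I` (defined as `0` if none exists). -/
noncomputable def hilbertPoly (k : Type) [Field k] {σ : Type} (I : Ideal (MvPolynomial σ k)) :
    Polynomial ℚ :=
  if h : ∃ P : Polynomial ℚ, IsHilbertPolyOf k I P then h.choose else 0

/-- The multiplicity (degree) `e(R/I)`: `(δ-1)!` times the leading coefficient of the Hilbert
polynomial of `R/I`, whose degree is `δ - 1` where `δ = dim R/I ≥ 1`. -/
noncomputable def multiplicityDeg (k : Type) [Field k] {σ : Type}
    (I : Ideal (MvPolynomial σ k)) : ℚ :=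
  (Nat.factorial (hilbertPoly k I).natDegree) * (hilbertPoly k I).leadingCoeff

/-- The `m`-th symbolic power of an ideal `J`:
`J^{(m)} = ⋂_{P ∈ Ass(A/J)} (J^m A_P ∩ A)`. -/
noncomputable def symbolicPower {A : Type*} [CommRing A] (J : Ideal A) (m : ℕ) : Ideal A :=
  sInf { K : Ideal A | ∃ (P : Ideal A) (hP : IsAssociatedPrime P (A ⧸ J)),
    K = Ideal.comap (algebraMap A (Localization (@Ideal.primeCompl A _ P hP.1)))
          (Ideal.map (algebraMap A (Localization (@Ideal.primeCompl A _ P hP.1))) (J ^ m)) }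

/-- `α(I)`: the least degree of a nonzero form in `I`. -/
noncomputable def alphaDeg (k : Type) [Field k] {σ : Type} (I : Ideal (MvPolynomial σ k)) : ℕ :=
  sInf {d : ℕ | ∃ p ∈ I, p ≠ 0 ∧ MvPolynomial.IsHomogeneous p d}

/-- `dim_k Tor_i^A(M, N)`, the rank over the base field `k` of the Tor module. -/
noncomputable def torRank (k : Type) [Field k] (A : Type) [CommRing A] [Algebra k A]
    (M N : Type) [AddCommGroup M] [Module A M] [AddCommGroup N] [Module A N] (i : ℕ) :
    Cardinal :=
  Module.rank k (RestrictScalars k A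
    (((Tor (ModuleCat A) i).obj (ModuleCat.of A M)).obj (ModuleCat.of A N)))

/-- The `i`-th total Betti number `dim_k Tor_i(S/I, k)` of `S/I`, where
`k = S/(x_i : i ∈ σ)`. -/
noncomputable def bettiNum (k : Type) [Field k] {σ : Type} (I : Ideal (MvPolynomial σ k))
    (i : ℕ) : Cardinal :=
  torRank k (MvPolynomial σ k) (MvPolynomial σ k ⧸ I)
    (MvPolynomial σ k ⧸ irrelevantIdeal k σ) i

/-- The first map `I_S → I_C ⊕ I_S`, `g ↦ (g, f·g)`, of the basic double linkage sequence. -/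
def bdlFirstMap {A : Type*} [CommRing A] {I_S I_C : Ideal A} (h : I_S ≤ I_C) (f : A) :
    I_S →ₗ[A] I_C × I_S :=
  LinearMap.prod (Submodule.inclusion h) (f • LinearMap.id)

/-- The second map `I_C ⊕ I_S → f·I_C + I_S`, `(a, b) ↦ f·a - b`, of the basic double
linkage sequence. -/
def bdlSecondMap {A : Type*} [CommRing A] (I_C I_S : Ideal A) (f : A) :
    I_C × I_S →ₗ[A] ↥(Ideal.span {f} * I_C + I_S) :=
  LinearMap.coprod
    (LinearMap.codRestrict ((Ideal.span {f} * I_C + I_S : Ideal A) : Submodule A A)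
      (f • (Submodule.subtype (I_C : Submodule A A)))
      (fun c => Submodule.mem_sup_left
        (Ideal.mul_mem_mul (Ideal.mem_span_singleton_self f) c.2)))
    (- LinearMap.codRestrict ((Ideal.span {f} * I_C + I_S : Ideal A) : Submodule A A)
      (Submodule.subtype (I_S : Submodule A A))
      (fun c => Submodule.mem_sup_right c.2))

/-- The ideal `I_{V_{λ,c}}` of the codimension-`c` configuration determined by `f_1, …, f_s`:
the intersection of the ideals `(f_{i_1}, …, f_{i_c})` over all `c`-subsets. -/
def configIdeal {A : Type*} [CommRing A] {s : ℕ} (c : ℕ) (f : Fin s → A) : Ideal A :=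
  ⨅ T ∈ {T : Finset (Fin s) | T.card = c}, Ideal.span (f '' ↑T)

/-- Every sublist of at most `m` of the elements `f 1, …, f s` (in any order, without
repetitions) is a regular sequence. -/
def SubsetsRegular {A : Type*} [CommRing A] {s : ℕ} (f : Fin s → A) (m : ℕ) : Prop :=
  ∀ l : List (Fin s), l.Nodup → l.length ≤ m →
    RingTheory.Sequence.IsRegular A (l.map f)

/-- `Δ` is (the independence complex of) a matroid on `{1, …, s}`: a nonempty collection of
subsets closed under inclusion and satisfying the augmentation axiom. -/
def IsMatroid {s : ℕ} (Δ : Finset (Fin s) → Prop) : Prop :=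
  Δ ∅ ∧ (∀ F G : Finset (Fin s), Δ F → G ⊆ F → Δ G) ∧
    (∀ F G : Finset (Fin s), Δ F → Δ G → G.card < F.card →
      ∃ j ∈ F, j ∉ G ∧ Δ (insert j G))

/-- `F` is a basis (facet) of the simplicial complex `Δ`: a maximal face. -/
def IsBasisOf {s : ℕ} (Δ : Finset (Fin s) → Prop) (F : Finset (Fin s)) : Prop :=
  Δ F ∧ ∀ G : Finset (Fin s), Δ G → F ⊆ G → G = F

/-- The Stanley–Reisner ideal of `Δ`, generated by the squarefree monomials corresponding
to the non-faces of `Δ`. -/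
def stanleyReisnerIdeal (k : Type) [Field k] {s : ℕ} (Δ : Finset (Fin s) → Prop) :
    Ideal (MvPolynomial (Fin s) k) :=
  Ideal.span
    ((fun F : Finset (Fin s) => ∏ i ∈ F, (X i : MvPolynomial (Fin s) k)) '' {F | ¬ Δ F})

/-- The ideal `I_{W_c}`: the intersection of all ideals `(A_{i_1,j_1}, …, A_{i_c,j_c})`
where `i_1 < ⋯ < i_c` and each generator is chosen from a different group. -/
def multiPartiteIdeal {A : Type*} [CommRing A] {s : ℕ} (c : ℕ) {e : Fin s → ℕ}
    (g : (i : Fin s) → Fin (e i) → A) : Ideal A :=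
  ⨅ T ∈ {T : Finset (Fin s) | T.card = c}, ⨅ j : (i : Fin s) → Fin (e i),
    Ideal.span ((fun i => g i (j i)) '' ↑T)

end

section BasicDoubleLinkage

variable {A : Type*} [CommRing A] {I_S I_C : Ideal A}

@[simp]
lemma bdlFirstMap_apply_fst (h : I_S ≤ I_C) (f : A) (g : I_S) :
    ((bdlFirstMap h f g).1 : A) = g := rfl

@[simp]
lemma bdlFirstMap_apply_snd (h : I_S ≤ I_C) (f : A) (g : I_S) :
    ((bdlFirstMap h f g).2 : A) = f * g := rfl

@[simp]
lemma bdlSecondMap_apply (f : A) (x : I_C × I_S) :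
    (bdlSecondMap I_C I_S f x : A) = f * x.1 - x.2 := by
  simp [bdlSecondMap, sub_eq_add_neg]

lemma bdlFirstMap_injective (h : I_S ≤ I_C) (f : A) : Function.Injective (bdlFirstMap h f) :=
  fun _ _ hgh => Subtype.ext (congrArg (fun x => (x.1 : A)) hgh)

lemma bdlSecondMap_surjective (f : A) : Function.Surjective (bdlSecondMap I_C I_S f) := by
  rintro ⟨x, hx⟩
  obtain ⟨y, hy, z, hz, rfl⟩ := Submodule.mem_sup.mp hx
  obtain ⟨a, ha, rfl⟩ := Ideal.mem_span_singleton_mul.mp hy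
  exact ⟨(⟨a, ha⟩, ⟨-z, neg_mem hz⟩), Subtype.ext (by rw [bdlSecondMap_apply]; ring)⟩

lemma bdlFirstMap_exact (h : I_S ≤ I_C) {f : A} (hf : ∀ g, f * g ∈ I_S → g ∈ I_S) :
    Function.Exact (bdlFirstMap h f) (bdlSecondMap I_C I_S f) := by
  rintro ⟨a, b⟩
  constructor
  · intro hab
    have hfa : f * (a : A) = b := by
      have := congrArg Subtype.val hab
      rwa [bdlSecondMap_apply, ZeroMemClass.coe_zero, sub_eq_zero] at this
    -- `f·a = b ∈ I_S` and `f` is a nonzerodivisor modulo `I_S`.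
    exact ⟨⟨a, hf _ (hfa ▸ b.2)⟩, Prod.ext (Subtype.ext rfl) (Subtype.ext hfa)⟩
  · rintro ⟨g, hg⟩
    rw [← hg]
    exact Subtype.ext (by
      rw [bdlSecondMap_apply, bdlFirstMap_apply_fst, bdlFirstMap_apply_snd, sub_self,
        ZeroMemClass.coe_zero])

end BasicDoubleLinkage

theorem statement1_general (k : Type) [Field k] (n : ℕ)
    (I_C I_S : Ideal (MvPolynomial (Fin (n + 1)) k))
    (hSC : I_S ≤ I_C)
    (f : MvPolynomial (Fin (n + 1)) k)
    (hnzd : ∀ g, f * g ∈ I_S → g ∈ I_S) :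
    Function.Injective (bdlFirstMap hSC f) ∧
      Function.Exact (bdlFirstMap hSC f) (bdlSecondMap I_C I_S f) ∧
      Function.Surjective (bdlSecondMap I_C I_S f) :=
  ⟨bdlFirstMap_injective hSC f, bdlFirstMap_exact hSC hnzd, bdlSecondMap_surjective f⟩

/-- The basic double linkage short exact sequence
`0 → I_S(−d) → I_C(−d) ⊕ I_S → I → 0`. -/
theorem statement1 (k : Type) [Field k] [Infinite k] (n c : ℕ) (hc : 1 ≤ c)
    (I_C I_S : Ideal (MvPolynomial (Fin (n + 1)) k))
    (homC : IsHomogeneousIdeal I_C)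
    (satC : Submodule.colon (I_C : Submodule (MvPolynomial (Fin (n + 1)) k)
        (MvPolynomial (Fin (n + 1)) k)) (irrelevantIdeal k (Fin (n + 1))) = I_C)
    (htC : idealHeight I_C = (c : ℕ∞))
    (hSC : I_S ≤ I_C) (homS : IsHomogeneousIdeal I_S)
    (htS : idealHeight I_S = ((c - 1 : ℕ) : ℕ∞))
    (cmS : IsCMQuotient I_S)
    (f : MvPolynomial (Fin (n + 1)) k) (d : ℕ) (hf : f.IsHomogeneous d)
    (hnzd : ∀ g, f * g ∈ I_S → g ∈ I_S) :
    Function.Injective (bdlFirstMap hSC f) ∧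
      Function.Exact (bdlFirstMap hSC f) (bdlSecondMap I_C I_S f) ∧
      Function.Surjective (bdlSecondMap I_C I_S f) :=
  statement1_general k n I_C I_S hSC f hnzd
end

section
/- Let I_C ⊆ R be a saturated homogeneous ideal of height c, let I_S ⊆ I_C be a homogeneous ideal such that R/I_S is Cohen–Macaulay of height c−1, and let f ∈ R be a homogeneous form of degree d that is a nonzerodivisor on R/I_S. Set I = f·I_C + I_S. Then for every integer t, the Hilbert functions satisfy h_{R/I}(t) = h_{R/I_S}(t) − h_{R/I_S}(t−d) + h_{R/I_C}(t−d). -/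
/- ------------------------------------------------------------------
   Common definitions
------------------------------------------------------------------ -/

open MvPolynomial CategoryTheory

/-!
In degree `d + n` the ideal `I = f·I_C + I_S` has `[I]_{d+n} = f·[I_C]_n + [I_S]_{d+n}`, and
because `f` is a nonzerodivisor modulo `I_S` the two summands meet exactly in `f·[I_S]_n`.
Grassmann's formula then gives `dim [I]_{d+n} = dim [I_C]_n + dim [I_S]_{d+n} - dim [I_S]_n`,
the degree-wise form of the exact sequence `0 → I_S(-d) → I_C(-d) ⊕ I_S → I → 0`.
In degrees below `d`, simply `[I]_t = [I_S]_t`.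
-/

namespace MvPolynomial

section CommSemiring

variable {R σ : Type*} [CommSemiring R] {f g : MvPolynomial σ R} {d n : ℕ}

attribute [local instance] MvPolynomial.gradedAlgebra

theorem IsHomogeneous.homogeneousComponent_mul_of_lt (hf : f.IsHomogeneous d) (h : n < d) :
    homogeneousComponent n (f * g) = 0 := by
  rw [← decomposition.decompose'_apply]
  exact DirectSum.coe_decompose_mul_of_left_mem_of_not_le (homogeneousSubmodule σ R)
    ((mem_homogeneousSubmodule d f).2 hf) (not_le.2 h)

theorem IsHomogeneous.homogeneousComponent_add_mul (hf : f.IsHomogeneous d) (n : ℕ) :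
    homogeneousComponent (d + n) (f * g) = f * homogeneousComponent n g := by
  have := DirectSum.coe_decompose_mul_of_left_mem_of_le (homogeneousSubmodule σ R) (b := g)
    ((mem_homogeneousSubmodule d f).2 hf) (Nat.le_add_right d n)
  rw [Nat.add_sub_cancel_left] at this
  rw [← decomposition.decompose'_apply, ← decomposition.decompose'_apply]
  exact this

end CommSemiring

end MvPolynomial

noncomputable def homogeneousPart {R σ : Type*} [CommSemiring R] (J : Ideal (MvPolynomial σ R))
    (n : ℕ) : Submodule R (MvPolynomial σ R) :=
  Submodule.restrictScalars R (J : Submodule (MvPolynomial σ R) (MvPolynomial σ R)) ⊓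
    homogeneousSubmodule σ R n

section Field

variable {k σ : Type} [Field k] {I_C I_S : Ideal (MvPolynomial σ k)} {f : MvPolynomial σ k}
  {d : ℕ}

instance [Finite σ] (J : Ideal (MvPolynomial σ k)) (n : ℕ) :
    FiniteDimensional k (homogeneousPart J n) :=
  haveI : FiniteDimensional k (homogeneousSubmodule σ k n) :=
    Module.Finite.iff_fg.2 (homogeneousSubmodule_fg σ k n)
  Submodule.finiteDimensional_of_le inf_le_right

theorem hilbertFn_of_neg (J : Ideal (MvPolynomial σ k)) {t : ℤ} (ht : t < 0) :
    hilbertFn k J t = 0 :=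
  if_pos ht

theorem hilbertFn_natCast (J : Ideal (MvPolynomial σ k)) (n : ℕ) :
    hilbertFn k J n = (Module.finrank k (homogeneousSubmodule σ k n) : ℤ) -
      Module.finrank k (homogeneousPart J n) := by
  rw [hilbertFn, if_neg (Int.natCast_nonneg n).not_gt, Int.toNat_natCast]
  rfl

theorem homogeneousPart_span_mul_sup_of_lt (homS : IsHomogeneousIdeal I_S)
    (hf : f.IsHomogeneous d) {n : ℕ} (hn : n < d) :
    homogeneousPart (Ideal.span {f} * I_C + I_S) n = homogeneousPart I_S n := by
  refine le_antisymm (fun x hx => ?_) (inf_le_inf_right _ fun x hx => Submodule.mem_sup_right hx)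
  obtain ⟨hxI, hxn⟩ := Submodule.mem_inf.1 hx
  obtain ⟨y, hy, s, hs, rfl⟩ := Submodule.mem_sup.1 hxI
  obtain ⟨g, -, rfl⟩ := Ideal.mem_span_singleton_mul.1 hy
  have hcomp := homogeneousComponent_eq_self hxn
  rw [map_add, hf.homogeneousComponent_mul_of_lt hn, zero_add] at hcomp
  exact ⟨hcomp ▸ homS s hs n, hxn⟩

theorem homogeneousPart_span_mul_sup (homC : IsHomogeneousIdeal I_C)
    (homS : IsHomogeneousIdeal I_S) (hf : f.IsHomogeneous d) (n : ℕ) :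
    homogeneousPart (Ideal.span {f} * I_C + I_S) (d + n)
      = (homogeneousPart I_C n).map (LinearMap.mulLeft k f) ⊔ homogeneousPart I_S (d + n) := by
  refine le_antisymm (fun x hx => ?_) (sup_le ?_ ?_)
  · obtain ⟨hxI, hxn⟩ := Submodule.mem_inf.1 hx
    obtain ⟨y, hy, s, hs, rfl⟩ := Submodule.mem_sup.1 hxI
    obtain ⟨g, hg, rfl⟩ := Ideal.mem_span_singleton_mul.1 hy
    rw [← homogeneousComponent_eq_self hxn, map_add, hf.homogeneousComponent_add_mul]
    exact Submodule.add_mem_sup ⟨_, ⟨homC g hg n, homogeneousComponent_mem n g⟩, rfl⟩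
      ⟨homS s hs _, homogeneousComponent_mem _ s⟩
  · rintro _ ⟨a, ⟨ha, han⟩, rfl⟩
    exact ⟨Submodule.mem_sup_left (Ideal.mul_mem_mul (Ideal.mem_span_singleton_self f) ha),
      (mem_homogeneousSubmodule _ _).2 (hf.mul han)⟩
  · exact inf_le_inf_right _ fun x hx => Submodule.mem_sup_right hx

theorem map_homogeneousPart_inf_homogeneousPart (hSC : I_S ≤ I_C) (hf : f.IsHomogeneous d)
    (hnzd : ∀ g, f * g ∈ I_S → g ∈ I_S) (n : ℕ) :
    (homogeneousPart I_C n).map (LinearMap.mulLeft k f) ⊓ homogeneousPart I_S (d + n)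
      = (homogeneousPart I_S n).map (LinearMap.mulLeft k f) := by
  refine le_antisymm ?_ (le_inf (Submodule.map_mono (inf_le_inf_right _ hSC)) ?_)
  · rintro _ ⟨⟨a, ⟨-, han⟩, rfl⟩, hfa, -⟩
    exact ⟨a, ⟨hnzd a hfa, han⟩, rfl⟩
  · rintro _ ⟨a, ⟨ha, han⟩, rfl⟩
    exact ⟨I_S.mul_mem_left f ha, (mem_homogeneousSubmodule _ _).2 (hf.mul han)⟩


theorem finrank_homogeneousPart_span_mul_sup [Finite σ] (homC : IsHomogeneousIdeal I_C)
    (homS : IsHomogeneousIdeal I_S) (hSC : I_S ≤ I_C) (hf : f.IsHomogeneous d)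
    (hnzd : ∀ g, f * g ∈ I_S → g ∈ I_S) (n : ℕ) :
    Module.finrank k (homogeneousPart (Ideal.span {f} * I_C + I_S) (d + n)) +
        Module.finrank k (homogeneousPart I_S n)
      = Module.finrank k (homogeneousPart I_C n) +
        Module.finrank k (homogeneousPart I_S (d + n)) := by
  rw [homogeneousPart_span_mul_sup homC homS hf]
  rcases eq_or_ne f 0 with rfl | hf0
  · -- `0` is a nonzerodivisor modulo `I_S` only if `I_S` is the unit ideal
    obtain rfl : I_S = ⊤ := eq_top_iff.2 fun g _ => hnzd g (by simp)
    obtain rfl : I_C = ⊤ := top_le_iff.1 hSC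
    rw [LinearMap.mulLeft_zero_eq_zero, Submodule.map_zero, bot_sup_eq, add_comm]
  · let e := Submodule.equivMapOfInjective (LinearMap.mulLeft k f) (mul_right_injective₀ hf0)
    rw [(e (homogeneousPart I_C n)).finrank_eq, (e (homogeneousPart I_S n)).finrank_eq,
      ← map_homogeneousPart_inf_homogeneousPart hSC hf hnzd,
      Submodule.finrank_sup_add_finrank_inf_eq]

end Field

theorem statement3_general (k : Type) [Field k] (n : ℕ)
    (I_C I_S : Ideal (MvPolynomial (Fin (n + 1)) k))
    (homC : IsHomogeneousIdeal I_C)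
    (hSC : I_S ≤ I_C) (homS : IsHomogeneousIdeal I_S)
    (f : MvPolynomial (Fin (n + 1)) k) (d : ℕ) (hf : f.IsHomogeneous d)
    (hnzd : ∀ g, f * g ∈ I_S → g ∈ I_S) :
    ∀ t : ℤ, hilbertFn k (Ideal.span {f} * I_C + I_S) t
      = hilbertFn k I_S t - hilbertFn k I_S (t - d) + hilbertFn k I_C (t - d) := by
  intro t
  rcases lt_or_ge t 0 with ht | ht
  · simp only [hilbertFn_of_neg _ ht, hilbertFn_of_neg _ (by omega : t - d < 0), sub_zero,
      add_zero]
  lift t to ℕ using ht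
  rcases lt_or_ge t d with htd | htd
  · have htd' : (t : ℤ) - d < 0 := by omega
    rw [hilbertFn_of_neg I_S htd', hilbertFn_of_neg I_C htd', hilbertFn_natCast,
      hilbertFn_natCast, homogeneousPart_span_mul_sup_of_lt homS hf htd, sub_zero, add_zero]
  obtain ⟨m, rfl⟩ := Nat.exists_eq_add_of_le htd
  have hdim := finrank_homogeneousPart_span_mul_sup homC homS hSC hf hnzd m
  rw [show ((d + m : ℕ) : ℤ) - d = m by push_cast; ring]
  simp only [hilbertFn_natCast]
  omega

theorem statement3 (k : Type) [Field k] [Infinite k] (n c : ℕ) (hc : 1 ≤ c)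
    (I_C I_S : Ideal (MvPolynomial (Fin (n + 1)) k))
    (homC : IsHomogeneousIdeal I_C)
    (satC : Submodule.colon (I_C : Submodule (MvPolynomial (Fin (n + 1)) k)
        (MvPolynomial (Fin (n + 1)) k)) (irrelevantIdeal k (Fin (n + 1))) = I_C)
    (htC : idealHeight I_C = (c : ℕ∞))
    (hSC : I_S ≤ I_C) (homS : IsHomogeneousIdeal I_S)
    (htS : idealHeight I_S = ((c - 1 : ℕ) : ℕ∞))
    (cmS : IsCMQuotient I_S)
    (f : MvPolynomial (Fin (n + 1)) k) (d : ℕ) (hf : f.IsHomogeneous d)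
    (hnzd : ∀ g, f * g ∈ I_S → g ∈ I_S) :
    ∀ t : ℤ, hilbertFn k (Ideal.span {f} * I_C + I_S) t
      = hilbertFn k I_S t - hilbertFn k I_S (t - d) + hilbertFn k I_C (t - d) :=
  statement3_general k n I_C I_S homC hSC homS f d hf hnzd
end

section
/- Let f_1,…,f_s ∈ R be homogeneous polynomials of degrees d_1,…,d_s such that every subset of at most c+1 of them is an R-regular sequence, where 1 ≤ c ≤ min(n,s). Then ⋂_{1≤i_1<⋯<i_c≤s} (f_{i_1},…,f_{i_c}) = ( { f_{i_1} f_{i_2} ⋯ f_{i_{s−c+1}} : 1 ≤ i_1 < i_2 < ⋯ < i_{s−c+1} ≤ s } ); that is, the configuration ideal is generated by all products of s−c+1 of the forms f_1,…,f_s. -/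
open MvPolynomial CategoryTheory

/-! Products of `s - c + 1` of the forms meet every `c`-subset of the indices, so they lie in
every ideal `(f_S)`. The converse is by induction on the index set. When `a` is added to `U`,
an element `x` of the configuration ideal of `insert a U` is, by induction, a combination
`∑ co_T ∏_{i ∈ T} f_i` over the `m`-subsets `T ⊆ U`. For a fixed `T₀`, the `c`-set
`S = {a} ∪ (U \ T₀)` meets every other `T`, so `co_{T₀} ∏_{T₀} f ∈ (f_S)`. Since `T₀` is
disjoint from `S`, the regularity of `c + 1` of the forms makes every `f_i`, `i ∈ T₀`, a
nonzerodivisor modulo `(f_S)`; hence `co_{T₀} ∈ (f_S)`, and `co_{T₀} ∏_{T₀} f` is a combination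
of products of `m + 1` of the forms. -/

open Finset

section

variable {A : Type*} [CommRing A]

lemma isSMulRegular_prod {M κ : Type*} [AddCommGroup M] [Module A M] {s : Finset κ} {g : κ → A}
    (h : ∀ i ∈ s, IsSMulRegular M (g i)) : IsSMulRegular M (∏ i ∈ s, g i) :=
  Finset.prod_induction g _ (fun _ _ => IsSMulRegular.mul) (IsSMulRegular.one M) h

lemma smul_mem_of_sum_smul_mem {κ : Type*} {J : Ideal A} {s : Finset κ} {co g : κ → A} {t : κ}
    (ht : t ∈ s) (hsum : ∑ i ∈ s, co i • g i ∈ J) (hg : ∀ i ∈ s, i ≠ t → g i ∈ J) :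
    co t • g t ∈ J := by
  rw [← Ideal.Quotient.eq_zero_iff_mem, map_sum,
    Finset.sum_eq_single_of_mem t ht fun i hi hit => ?_] at hsum
  · rwa [Ideal.Quotient.eq_zero_iff_mem] at hsum
  · rw [Ideal.Quotient.eq_zero_iff_mem]
    exact J.mul_mem_left _ (hg i hi hit)

lemma isSMulRegular_quotient_ofList_of_isRegular_append {l : List A} {r : A}
    (h : RingTheory.Sequence.IsRegular A (l ++ [r])) :
    IsSMulRegular (A ⧸ Ideal.ofList l) r := by
  have h' := ((RingTheory.Sequence.isWeaklyRegular_append_iff A l [r]).mp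
    h.toIsWeaklyRegular).2
  rwa [RingTheory.Sequence.isWeaklyRegular_singleton_iff, smul_eq_mul, Ideal.mul_top] at h'

lemma SubsetsRegular.isSMulRegular_quotient {s m : ℕ} {f : Fin s → A} (hf : SubsetsRegular f m)
    {S : Finset (Fin s)} (hS : S.card < m) {i : Fin s} (hi : i ∉ S) :
    IsSMulRegular (A ⧸ Ideal.span (f '' S)) (f i) := by
  have hreg := hf (S.toList ++ [i]) (by simp [List.nodup_append, S.nodup_toList, hi])
    (by simpa using hS)
  have hspan : Ideal.ofList (S.toList.map f) = Ideal.span (f '' S) := by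
    rw [Ideal.ofList]
    congr 1
    ext
    simp
  rw [List.map_append, List.map_singleton] at hreg
  rw [← hspan]
  exact isSMulRegular_quotient_ofList_of_isRegular_append hreg

end

section

variable {A ι : Type*} [CommRing A] (f : ι → A)

def subsetProdIdeal (U : Finset ι) (m : ℕ) : Ideal A :=
  Ideal.span ((fun T => ∏ i ∈ T, f i) '' ↑(U.powersetCard m))

variable {f}

lemma prod_mem_span_image {S T : Finset ι} {j : ι} (hjS : j ∈ S) (hjT : j ∈ T) :
    ∏ i ∈ T, f i ∈ Ideal.span (f '' S) :=
  Ideal.mem_of_dvd _ (Finset.dvd_prod_of_mem f hjT) (Ideal.subset_span ⟨j, hjS, rfl⟩)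

lemma span_image_le_subsetProdIdeal_one (U : Finset ι) :
    Ideal.span (f '' U) ≤ subsetProdIdeal f U 1 := by
  rw [Ideal.span_le]
  rintro _ ⟨i, hi, rfl⟩
  exact Ideal.subset_span ⟨{i}, by simpa using hi, prod_singleton f i⟩

lemma mul_prod_mem_subsetProdIdeal [DecidableEq ι] {S T V : Finset ι} {y : A}
    (hy : y ∈ Ideal.span (f '' S)) (hSV : S ⊆ V) (hTV : T ⊆ V) (hST : Disjoint S T) :
    y * ∏ i ∈ T, f i ∈ subsetProdIdeal f V (T.card + 1) := by
  suffices Ideal.span (f '' S) ≤ Submodule.comap (LinearMap.mulRight A (∏ i ∈ T, f i))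
      (subsetProdIdeal f V (T.card + 1)) from this hy
  rw [Ideal.span_le]
  rintro _ ⟨j, hj, rfl⟩
  have hjT : j ∉ T := Finset.disjoint_left.mp hST hj
  refine Ideal.subset_span ⟨insert j T, ?_, prod_insert hjT⟩
  simp [Finset.insert_subset (hSV hj) hTV, card_insert_of_notMem hjT]

lemma mem_subsetProdIdeal_insert [DecidableEq ι] {c m : ℕ}
    (hreg : ∀ S : Finset ι, S.card = c → ∀ i ∉ S, IsSMulRegular (A ⧸ Ideal.span (f '' S)) (f i))
    {U : Finset ι} {a : ι} (ha : a ∉ U) (hm : m + c = U.card + 1) {x : A}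
    (hxU : x ∈ subsetProdIdeal f U m)
    (hx : ∀ S ⊆ insert a U, S.card = c → x ∈ Ideal.span (f '' S)) :
    x ∈ subsetProdIdeal f (insert a U) (m + 1) := by
  obtain ⟨co, rfl⟩ := (Submodule.mem_span_image_finset_iff_exists_fun' _).mp hxU
  refine Ideal.sum_mem _ fun T₀ hT₀ => ?_
  obtain ⟨hT₀U, hT₀card⟩ := mem_powersetCard.mp hT₀
  set S := insert a (U \ T₀)
  have haT₀ : a ∉ T₀ := fun h => ha (hT₀U h)
  have hS : S.card = c := by
    rw [card_insert_of_notMem (by simp [ha]), card_sdiff_of_subset hT₀U]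
    have := card_le_card hT₀U
    omega
  have hST₀ : Disjoint S T₀ := by
    simp [S, disjoint_insert_left, haT₀, sdiff_disjoint]
  have hterm : co T₀ • ∏ i ∈ T₀, f i ∈ Ideal.span (f '' S) := by
    refine smul_mem_of_sum_smul_mem hT₀ (hx S ?_ hS) fun T hT hne => ?_
    · exact insert_subset_insert a sdiff_subset
    · obtain ⟨hTU, hTcard⟩ := mem_powersetCard.mp hT
      obtain ⟨j, hjT, hjT₀⟩ := not_subset.mp fun hsub =>
        hne (eq_of_subset_of_card_le hsub (by omega))
      exact prod_mem_span_image (by simp [S, hTU hjT, hjT₀]) hjT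
  have hco : co T₀ ∈ Ideal.span (f '' S) :=
    mem_of_isSMulRegular_quotient_of_smul_mem
      (isSMulRegular_prod fun i hi => hreg S hS i (disjoint_right.mp hST₀ hi))
      (by rwa [smul_eq_mul, mul_comm, ← smul_eq_mul] at hterm)
  rw [← hT₀card]
  exact mul_prod_mem_subsetProdIdeal hco (insert_subset_insert a sdiff_subset)
    (hT₀U.trans (subset_insert a U)) hST₀

end

lemma mem_subsetProdIdeal_of_forall_mem_span {A ι : Type*} [CommRing A] [DecidableEq ι]
    {f : ι → A} {c : ℕ}
    (hreg : ∀ S : Finset ι, S.card = c → ∀ i ∉ S, IsSMulRegular (A ⧸ Ideal.span (f '' S)) (f i))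
    {x : A} (U : Finset ι) (hcU : c ≤ U.card)
    (hx : ∀ S ⊆ U, S.card = c → x ∈ Ideal.span (f '' S)) :
    x ∈ subsetProdIdeal f U (U.card - c + 1) := by
  induction U using Finset.induction_on with
  | empty =>
    obtain rfl : c = 0 := by simpa using hcU
    exact span_image_le_subsetProdIdeal_one ∅ (hx ∅ subset_rfl card_empty)
  | insert a U ha ih =>
    have hcard := card_insert_of_notMem ha
    rw [hcard] at hcU ⊢
    obtain rfl | hc := hcU.eq_or_lt
    · rw [Nat.sub_self]
      exact span_image_le_subsetProdIdeal_one _ (hx _ subset_rfl hcard)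
    · have hxU := ih (by omega) fun S hS => hx S (hS.trans (subset_insert a U))
      rw [show U.card + 1 - c + 1 = U.card - c + 1 + 1 by omega]
      exact mem_subsetProdIdeal_insert hreg ha (by omega) hxU hx

lemma mem_configIdeal {A : Type*} [CommRing A] {s c : ℕ} {f : Fin s → A} {x : A} :
    x ∈ configIdeal c f ↔ ∀ S : Finset (Fin s), S.card = c → x ∈ Ideal.span (f '' S) := by
  simp [configIdeal]

lemma span_prod_le_configIdeal {A : Type*} [CommRing A] {s : ℕ} (c : ℕ) (f : Fin s → A) :
    Ideal.span ((fun T : Finset (Fin s) => ∏ i ∈ T, f i) ''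
      {T : Finset (Fin s) | T.card = s - c + 1}) ≤ configIdeal c f := by
  rw [Ideal.span_le]
  rintro _ ⟨T, hT, rfl⟩
  refine mem_configIdeal.mpr fun S hS => ?_
  obtain ⟨j, hj⟩ := inter_nonempty_of_card_lt_card_add_card (subset_univ T) (subset_univ S)
    (by simp_all; omega)
  exact prod_mem_span_image (mem_inter.mp hj).2 (mem_inter.mp hj).1

theorem configIdeal_eq_span_prod {A : Type*} [CommRing A] {s c : ℕ} (hcs : c ≤ s)
    {f : Fin s → A} (hreg : SubsetsRegular f (c + 1)) :
    configIdeal c f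
      = Ideal.span ((fun T : Finset (Fin s) => ∏ i ∈ T, f i) ''
          {T : Finset (Fin s) | T.card = s - c + 1}) := by
  refine le_antisymm (fun x hx => ?_) (span_prod_le_configIdeal c f)
  have hsubsets : ↑(powersetCard (s - c + 1) (univ : Finset (Fin s)))
      = {T : Finset (Fin s) | T.card = s - c + 1} :=
    Set.ext fun _ => mem_powersetCard_univ
  simpa [subsetProdIdeal, hsubsets] using mem_subsetProdIdeal_of_forall_mem_span
    (fun S hS i hi => hreg.isSMulRegular_quotient (by omega) hi) univ
    (by simpa using hcs) fun S _ hS => mem_configIdeal.mp hx S hS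

theorem statement7_general (k : Type) [Field k] (n s c : ℕ)
    (hcs : c ≤ s)
    (f : Fin s → MvPolynomial (Fin (n + 1)) k)
    (hreg : SubsetsRegular f (c + 1)) :
    configIdeal c f
      = Ideal.span ((fun T : Finset (Fin s) => ∏ i ∈ T, f i) ''
          {T : Finset (Fin s) | T.card = s - c + 1}) :=
  configIdeal_eq_span_prod hcs hreg

theorem statement7 (k : Type) [Field k] [Infinite k] (n s c : ℕ)
    (hc1 : 1 ≤ c) (hcn : c ≤ n) (hcs : c ≤ s)
    (f : Fin s → MvPolynomial (Fin (n + 1)) k) (d : Fin s → ℕ)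
    (hdeg : ∀ i, (f i).IsHomogeneous (d i))
    (hreg : SubsetsRegular f (c + 1)) :
    configIdeal c f
      = Ideal.span ((fun T : Finset (Fin s) => ∏ i ∈ T, f i) ''
          {T : Finset (Fin s) | T.card = s - c + 1}) :=
  statement7_general k n s c hcs f hreg
end

section
/- Let Δ be a matroid on [s] of dimension s−1−c, let n ≥ c, and let f_1,…,f_s ∈ R = k[x_0,…,x_n] be homogeneous polynomials such that every subset of at most c+1 of them is an R-regular sequence. Then φ_*(I_Δ) = ⋂_{F a basis of Δ} (f_i : i ∈ [s] \ F); that is, the specialization of the Stanley–Reisner ideal equals the intersection of the specializations of its minimal primes. -/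
/- ------------------------------------------------------------------
   Common definitions
------------------------------------------------------------------ -/

open MvPolynomial CategoryTheory

/-!
Induct on the ground set, splitting off an element `e`. The bases of `Δ` containing `e` are those
of the contraction `Δ / e` with `e` added and, unless `e` is a coloop, the bases avoiding `e` are
those of the deletion `Δ \ e`. So the intersection of the specialized primes of `Δ` is the
intersection of the corresponding ideals of `Δ / e` and of `Δ \ e` (the latter with `f e`
adjoined), both known by induction. These recombine to the specialized Stanley–Reisner ideal
`I(Δ)` because `I(Δ \ e) + f e · I(Δ / e) ⊆ I(Δ) ⊆ I(Δ / e) ∩ (I(Δ \ e) + (f e))` and `f e` is a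
non-zerodivisor modulo every specialized prime of `Δ / e`: such a prime is generated by few
enough of the `f i` that, together with `f e`, they form a regular sequence. For a loop the
contraction part disappears, for a coloop the deletion part.
-/

section Matroid

variable {s c : ℕ} {Δ : Finset (Fin s) → Prop} {e : Fin s} {E B B₁ F : Finset (Fin s)}

def deletion (Δ : Finset (Fin s) → Prop) (e : Fin s) (F : Finset (Fin s)) : Prop :=
  Δ F ∧ e ∉ F

def contraction (Δ : Finset (Fin s) → Prop) (e : Fin s) (F : Finset (Fin s)) : Prop :=
  e ∉ F ∧ Δ (insert e F)

structure IsMatroidOn (Δ : Finset (Fin s) → Prop) (E : Finset (Fin s)) (c : ℕ) : Prop where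
  isMatroid : IsMatroid Δ
  subset_ground : ∀ F, Δ F → F ⊆ E
  card_add_corank : ∀ B, IsBasisOf Δ B → B.card + c = E.card

theorem exists_isBasisOf_superset (hF : Δ F) : ∃ B, IsBasisOf Δ B ∧ F ⊆ B := by
  obtain ⟨B, hFB, hB⟩ := (Set.toFinite {G | Δ G}).exists_le_maximal hF
  exact ⟨B, ⟨hB.1, fun G hG hBG => (hB.2 hG hBG).antisymm hBG⟩, hFB⟩

theorem IsMatroid.card_le_of_isBasisOf (hΔ : IsMatroid Δ) (hB : IsBasisOf Δ B) (hF : Δ F) :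
    F.card ≤ B.card := by
  by_contra! hlt
  obtain ⟨j, -, hjB, hj⟩ := hΔ.2.2 F B hF hB.1 hlt
  exact hjB (hB.2 _ hj (Finset.subset_insert j B) ▸ Finset.mem_insert_self j B)

theorem IsMatroid.delete (hΔ : IsMatroid Δ) (e : Fin s) : IsMatroid (deletion Δ e) := by
  refine ⟨⟨hΔ.1, Finset.notMem_empty e⟩, fun F G hF hGF => ⟨hΔ.2.1 F G hF.1 hGF,
    Finset.notMem_mono hGF hF.2⟩, fun F G hF hG hlt => ?_⟩
  obtain ⟨j, hjF, hjG, hj⟩ := hΔ.2.2 F G hF.1 hG.1 hlt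
  refine ⟨j, hjF, hjG, hj, ?_⟩
  rw [Finset.mem_insert, not_or]
  exact ⟨fun hej => hF.2 (hej ▸ hjF), hG.2⟩

theorem IsMatroid.contract (hΔ : IsMatroid Δ) (he : Δ {e}) : IsMatroid (contraction Δ e) := by
  refine ⟨⟨Finset.notMem_empty e, he⟩, fun F G hF hGF => ⟨Finset.notMem_mono hGF hF.1,
    hΔ.2.1 _ _ hF.2 (Finset.insert_subset_insert e hGF)⟩, fun F G hF hG hlt => ?_⟩
  obtain ⟨j, hjF, hjG, hj⟩ := hΔ.2.2 (insert e F) (insert e G) hF.2 hG.2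
    (by rwa [Finset.card_insert_of_notMem hF.1, Finset.card_insert_of_notMem hG.1,
      add_lt_add_iff_right])
  rw [Finset.mem_insert, not_or] at hjG
  refine ⟨j, (Finset.mem_insert.1 hjF).resolve_left hjG.1, hjG.2, ?_, ?_⟩
  · rw [Finset.mem_insert, not_or]
    exact ⟨Ne.symm hjG.1, hG.1⟩
  · rwa [Finset.insert_comm]

theorem IsBasisOf.insert_of_contraction (hB : IsBasisOf (contraction Δ e) B) :
    IsBasisOf Δ (insert e B) := by
  refine ⟨hB.1.2, fun G hG hBG => ?_⟩
  have heG : e ∈ G := hBG (Finset.mem_insert_self e B)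
  have hG' : contraction Δ e (G.erase e) :=
    ⟨Finset.notMem_erase e G, by rwa [Finset.insert_erase heG]⟩
  have hBG' : B ⊆ G.erase e :=
    Finset.subset_erase.2 ⟨(Finset.subset_insert e B).trans hBG, hB.1.1⟩
  rw [← Finset.insert_erase heG, hB.2 _ hG' hBG']

theorem IsBasisOf.erase_to_contraction (hB : IsBasisOf Δ B) (heB : e ∈ B) :
    IsBasisOf (contraction Δ e) (B.erase e) := by
  refine ⟨⟨Finset.notMem_erase e B, by rw [Finset.insert_erase heB]; exact hB.1⟩,
    fun G hG hBG => ?_⟩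
  have hBG' : B ⊆ insert e G := by
    simpa only [Finset.insert_erase heB] using Finset.insert_subset_insert e hBG
  rw [← hB.2 _ hG.2 hBG', Finset.erase_insert hG.1]

theorem IsBasisOf.to_deletion (hB : IsBasisOf Δ B) (heB : e ∉ B) :
    IsBasisOf (deletion Δ e) B :=
  ⟨⟨hB.1, heB⟩, fun G hG hBG => hB.2 G hG.1 hBG⟩

theorem IsBasisOf.of_deletion (hB : IsBasisOf (deletion Δ e) B) (hΔ : IsMatroid Δ)
    (hB₁ : IsBasisOf Δ B₁) (heB₁ : e ∉ B₁) : IsBasisOf Δ B := by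
  obtain ⟨B₂, hB₂, hBB₂⟩ := exists_isBasisOf_superset hB.1.1
  have h₁ : B₁.card ≤ B.card := (hΔ.delete e).card_le_of_isBasisOf hB ⟨hB₁.1, heB₁⟩
  have h₂ : B₂.card ≤ B₁.card := hΔ.card_le_of_isBasisOf hB₁ hB₂.1
  rwa [Finset.eq_of_subset_of_card_le hBB₂ (h₂.trans h₁)]

theorem IsMatroidOn.contract (hΔ : IsMatroidOn Δ (insert e E) c) (he : e ∉ E) (hl : Δ {e}) :
    IsMatroidOn (contraction Δ e) E c where
  isMatroid := hΔ.isMatroid.contract hl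
  subset_ground F hF := (Finset.subset_insert_iff_of_notMem hF.1).1
    (hΔ.subset_ground _ (hΔ.isMatroid.2.1 _ F hF.2 (Finset.subset_insert e F)))
  card_add_corank B hB := by
    have h := hΔ.card_add_corank _ hB.insert_of_contraction
    rw [Finset.card_insert_of_notMem hB.1.1, Finset.card_insert_of_notMem he] at h
    omega

theorem IsMatroidOn.delete (hΔ : IsMatroidOn Δ (insert e E) c) (he : e ∉ E)
    (hB₁ : IsBasisOf Δ B₁) (heB₁ : e ∉ B₁) :
    ∃ c', c = c' + 1 ∧ IsMatroidOn (deletion Δ e) E c' := by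
  have hcard := hΔ.card_add_corank B₁ hB₁
  have hB₁E : B₁.card ≤ E.card := Finset.card_le_card
    ((Finset.subset_insert_iff_of_notMem heB₁).1 (hΔ.subset_ground B₁ hB₁.1))
  rw [Finset.card_insert_of_notMem he] at hcard
  refine ⟨c - 1, by omega, hΔ.isMatroid.delete e,
    fun F hF => (Finset.subset_insert_iff_of_notMem hF.2).1 (hΔ.subset_ground F hF.1),
    fun B hB => ?_⟩
  have h := hΔ.card_add_corank B (hB.of_deletion hΔ.isMatroid hB₁ heB₁)
  rw [Finset.card_insert_of_notMem he] at h
  omega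

end Matroid

section Ideals

variable {A : Type*} [CommRing A] {s c : ℕ} (f : Fin s → A)
variable {Δ : Finset (Fin s) → Prop} {e : Fin s} {E D B₁ F : Finset (Fin s)}

/-- The specialization `φ_*(I_Δ)` of the Stanley–Reisner ideal of `Δ`, viewed as a complex on
the ground set `E`. -/
def nonfaceIdeal (E : Finset (Fin s)) (Δ : Finset (Fin s) → Prop) : Ideal A :=
  Ideal.span ((fun F : Finset (Fin s) => ∏ i ∈ F, f i) '' {F | F ⊆ E ∧ ¬ Δ F})

def basisIntersection (E D : Finset (Fin s)) (Δ : Finset (Fin s) → Prop) : Ideal A :=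
  ⨅ B ∈ {B : Finset (Fin s) | IsBasisOf Δ B}, Ideal.span (f '' ↑(E \ B ∪ D))

theorem span_image_insert (D : Finset (Fin s)) (e : Fin s) :
    Ideal.span (f '' ↑(insert e D)) = Ideal.span {f e} ⊔ Ideal.span (f '' ↑D) := by
  rw [Finset.coe_insert, Set.image_insert_eq, Ideal.span_insert]

theorem prod_mem_nonfaceIdeal (hFE : F ⊆ E) (hF : ¬ Δ F) : ∏ i ∈ F, f i ∈ nonfaceIdeal f E Δ :=
  Ideal.subset_span ⟨F, ⟨hFE, hF⟩, rfl⟩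

theorem nonfaceIdeal_le_iff {I : Ideal A} :
    nonfaceIdeal f E Δ ≤ I ↔ ∀ F ⊆ E, ¬ Δ F → ∏ i ∈ F, f i ∈ I := by
  simp only [nonfaceIdeal, Ideal.span_le, Set.image_subset_iff]
  exact ⟨fun h F hFE hF => h ⟨hFE, hF⟩, fun h F hF => h F hF.1 hF.2⟩

theorem nonfaceIdeal_deletion_le (he : e ∉ E) :
    nonfaceIdeal f E (deletion Δ e) ≤ nonfaceIdeal f (insert e E) Δ :=
  (nonfaceIdeal_le_iff f).2 fun _ hFE hF => prod_mem_nonfaceIdeal f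
    (hFE.trans (Finset.subset_insert e E)) fun hΔF => hF ⟨hΔF, Finset.notMem_mono hFE he⟩

theorem nonfaceIdeal_le_deletion_sup :
    nonfaceIdeal f (insert e E) Δ ≤ nonfaceIdeal f E (deletion Δ e) ⊔ Ideal.span {f e} := by
  refine (nonfaceIdeal_le_iff f).2 fun F hFE hF => ?_
  by_cases heF : e ∈ F
  · exact Ideal.mem_sup_right (Ideal.mem_span_singleton.2 (Finset.dvd_prod_of_mem f heF))
  · exact Ideal.mem_sup_left (prod_mem_nonfaceIdeal f
      ((Finset.subset_insert_iff_of_notMem heF).1 hFE) fun h => hF h.1)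

theorem nonfaceIdeal_le_contraction (hΔ : IsMatroid Δ) (he : e ∉ E) :
    nonfaceIdeal f (insert e E) Δ ≤ nonfaceIdeal f E (contraction Δ e) := by
  refine (nonfaceIdeal_le_iff f).2 fun F hFE hF => ?_
  by_cases heF : e ∈ F
  · rw [← Finset.mul_prod_erase F f heF]
    refine Ideal.mul_mem_left _ _ (prod_mem_nonfaceIdeal f ?_ fun h => hF ?_)
    · rw [← Finset.erase_insert he]
      exact Finset.erase_subset_erase e hFE
    · simpa only [Finset.insert_erase heF] using h.2
  · exact prod_mem_nonfaceIdeal f ((Finset.subset_insert_iff_of_notMem heF).1 hFE)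
      fun h => hF (hΔ.2.1 _ F h.2 (Finset.subset_insert e F))

theorem mul_mem_nonfaceIdeal_of_mem_contraction (he : e ∉ E) {w : A}
    (hw : w ∈ nonfaceIdeal f E (contraction Δ e)) : f e * w ∈ nonfaceIdeal f (insert e E) Δ := by
  have hcolon : nonfaceIdeal f E (contraction Δ e) ≤
      (nonfaceIdeal f (insert e E) Δ).colon {f e} := by
    refine (nonfaceIdeal_le_iff f).2 fun F hFE hF => ?_
    have heF : e ∉ F := Finset.notMem_mono hFE he
    rw [Submodule.mem_colon_singleton, smul_eq_mul, mul_comm, ← Finset.prod_insert heF]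
    exact prod_mem_nonfaceIdeal f (Finset.insert_subset_insert e hFE) fun h => hF ⟨heF, h⟩
  simpa only [Submodule.mem_colon_singleton, smul_eq_mul, mul_comm] using hcolon hw

theorem nonfaceIdeal_eq_deletion_sup_of_loop (he : e ∉ E) (hl : ¬ Δ {e}) :
    nonfaceIdeal f (insert e E) Δ = nonfaceIdeal f E (deletion Δ e) ⊔ Ideal.span {f e} := by
  refine (nonfaceIdeal_le_deletion_sup f).antisymm
    (sup_le (nonfaceIdeal_deletion_le f he) ?_)
  rw [Ideal.span_singleton_le_iff_mem, ← Finset.prod_singleton f e]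
  exact prod_mem_nonfaceIdeal f (Finset.singleton_subset_iff.2 (Finset.mem_insert_self e E)) hl

theorem nonfaceIdeal_eq_contraction_of_coloop (hΔ : IsMatroid Δ) (he : e ∉ E)
    (hco : ∀ B, IsBasisOf Δ B → e ∈ B) :
    nonfaceIdeal f (insert e E) Δ = nonfaceIdeal f E (contraction Δ e) := by
  refine (nonfaceIdeal_le_contraction f hΔ he).antisymm
    ((nonfaceIdeal_le_iff f).2 fun F hFE hF => prod_mem_nonfaceIdeal f
      (hFE.trans (Finset.subset_insert e E)) fun hΔF => hF ⟨Finset.notMem_mono hFE he, ?_⟩)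
  obtain ⟨B, hB, hFB⟩ := exists_isBasisOf_superset hΔF
  exact hΔ.2.1 B _ hB.1 (Finset.insert_subset (hco B hB) hFB)

theorem inf_sup_eq_of_mul_mem_cancel {I Ic Id J : Ideal A} {x : A} (hId : Id ≤ I) (hIc : I ≤ Ic)
    (hI : I ≤ Id ⊔ Ideal.span {x}) (hxIc : ∀ w ∈ Ic, x * w ∈ I)
    (hx : ∀ a, x * a ∈ Ic ⊔ J → a ∈ Ic ⊔ J) :
    (Ic ⊔ J) ⊓ (Id ⊔ Ideal.span {x} ⊔ J) = I ⊔ J := by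
  refine le_antisymm (fun y ⟨hyc, hyd⟩ => ?_)
    (le_inf (sup_le_sup_right hIc J) (sup_le_sup_right hI J))
  obtain ⟨z, hz, γ, hγ, rfl⟩ := Submodule.mem_sup.1 hyd
  obtain ⟨v, hv, t, ht, rfl⟩ := Submodule.mem_sup.1 hz
  obtain ⟨h, rfl⟩ := Ideal.mem_span_singleton'.1 ht
  have hxh : x * h ∈ Ic ⊔ J := by
    have hxh_eq : x * h = v + h * x + γ - v - γ := by ring
    rw [hxh_eq]
    exact sub_mem (sub_mem hyc (Ideal.mem_sup_left (hIc (hId hv)))) (Ideal.mem_sup_right hγ)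
  obtain ⟨w, hw, γ₂, hγ₂, rfl⟩ := Submodule.mem_sup.1 (hx h hxh)
  have hsplit : v + (w + γ₂) * x + γ = (v + x * w) + (γ + x * γ₂) := by ring
  rw [hsplit]
  exact Ideal.add_mem _ (Ideal.mem_sup_left (Ideal.add_mem _ (hId hv) (hxIc w hw)))
    (Ideal.mem_sup_right (Ideal.add_mem _ hγ (Ideal.mul_mem_left _ x hγ₂)))

theorem SubsetsRegular.mem_of_mul_mem_span {m : ℕ} (hreg : SubsetsRegular f m) {S : Finset (Fin s)}
    (he : e ∉ S) (hS : S.card < m) {a : A} (ha : f e * a ∈ Ideal.span (f '' ↑S)) :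
    a ∈ Ideal.span (f '' ↑S) := by
  have hl : (S.toList ++ [e]).Nodup := by simp [List.nodup_append, S.nodup_toList, he]
  have hlen : (S.toList ++ [e]).length ≤ m := by simp only [List.length_append,
    Finset.length_toList, List.length_singleton]; omega
  have hseq := (hreg _ hl hlen).toIsWeaklyRegular
  rw [List.map_append, RingTheory.Sequence.isWeaklyRegular_append_iff, List.map_singleton,
    RingTheory.Sequence.isWeaklyRegular_singleton_iff] at hseq
  have hspan : Ideal.ofList (S.toList.map f) = Ideal.span (f '' ↑S) := by
    rw [Ideal.ofList]
    congr 1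
    ext x
    simp [eq_comm]
  rw [hspan, Ideal.smul_eq_mul, Ideal.mul_top] at hseq
  exact mem_of_isSMulRegular_quotient_of_smul_mem hseq.2 ha

theorem mem_basisIntersection {x : A} :
    x ∈ basisIntersection f E D Δ ↔ ∀ B, IsBasisOf Δ B → x ∈ Ideal.span (f '' ↑(E \ B ∪ D)) := by
  simp only [basisIntersection, Submodule.mem_iInf, Set.mem_ofPred_eq]

theorem basisIntersection_eq_top (h : ∀ B, ¬ IsBasisOf Δ B) : basisIntersection f E D Δ = ⊤ :=
  eq_top_iff.2 fun _ _ => (mem_basisIntersection f).2 fun B hB => absurd hB (h B)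

theorem basisIntersection_empty (hΔ : IsMatroidOn Δ ∅ c) :
    basisIntersection f ∅ D Δ = nonfaceIdeal f ∅ Δ ⊔ Ideal.span (f '' ↑D) := by
  have hbasis : IsBasisOf Δ ∅ :=
    ⟨hΔ.isMatroid.1, fun G hG _ => Finset.subset_empty.1 (hΔ.subset_ground G hG)⟩
  have hbot : nonfaceIdeal f ∅ Δ = ⊥ := eq_bot_iff.2 <| (nonfaceIdeal_le_iff f).2
    fun F hF hnF => absurd (Finset.subset_empty.1 hF ▸ hΔ.isMatroid.1) hnF
  rw [basisIntersection, hbot, bot_sup_eq]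
  simp only [Finset.empty_sdiff, Finset.empty_union]
  exact biInf_const ⟨∅, hbasis⟩

theorem mem_of_mul_mem_basisIntersection {m : ℕ} (hreg : SubsetsRegular f m)
    (hΔ : IsMatroidOn Δ E c) (hED : Disjoint E D) (he : e ∉ E) (heD : e ∉ D)
    (hm : c + D.card < m) {a : A} (ha : f e * a ∈ basisIntersection f E D Δ) :
    a ∈ basisIntersection f E D Δ := by
  refine (mem_basisIntersection f).2 fun B hB => ?_
  have hBE := hΔ.subset_ground B hB.1
  refine hreg.mem_of_mul_mem_span f ?_ ?_ ((mem_basisIntersection f).1 ha B hB)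
  · simp [he, heD]
  · rw [Finset.card_union_of_disjoint (Finset.disjoint_of_subset_left Finset.sdiff_subset hED),
      Finset.card_sdiff_of_subset hBE]
    have := hΔ.card_add_corank B hB
    omega

theorem basisIntersection_insert_eq_contraction (he : e ∉ E)
    (hco : ∀ B, IsBasisOf Δ B → e ∈ B) :
    basisIntersection f (insert e E) D Δ = basisIntersection f E D (contraction Δ e) := by
  ext x
  simp only [mem_basisIntersection]
  refine ⟨fun hx B hB => ?_, fun hx B hB => ?_⟩
  · simpa only [Finset.insert_sdiff_insert, Finset.sdiff_insert_of_notMem he] using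
      hx _ hB.insert_of_contraction
  · have h := hx _ (hB.erase_to_contraction (hco B hB))
    rwa [← Finset.sdiff_insert_of_notMem he, ← Finset.insert_sdiff_insert,
      Finset.insert_erase (hco B hB)] at h

theorem basisIntersection_insert_eq_inf (hΔ : IsMatroid Δ) (hB₁ : IsBasisOf Δ B₁) (heB₁ : e ∉ B₁)
    (he : e ∉ E) :
    basisIntersection f (insert e E) D Δ =
      basisIntersection f E D (contraction Δ e) ⊓
        basisIntersection f E (insert e D) (deletion Δ e) := by
  have hsplit : ∀ B : Finset (Fin s), e ∉ B → insert e E \ B ∪ D = E \ B ∪ insert e D :=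
    fun B heB => by
      rw [Finset.insert_sdiff_of_notMem _ heB, Finset.insert_union, Finset.union_insert]
  ext x
  simp only [Submodule.mem_inf, mem_basisIntersection]
  refine ⟨fun hx => ⟨fun B hB => ?_, fun B hB => ?_⟩, fun ⟨hc, hd⟩ B hB => ?_⟩
  · simpa only [Finset.insert_sdiff_insert, Finset.sdiff_insert_of_notMem he] using
      hx _ hB.insert_of_contraction
  · simpa only [hsplit B hB.1.2] using hx B (hB.of_deletion hΔ hB₁ heB₁)
  · by_cases heB : e ∈ B
    · have h := hc _ (hB.erase_to_contraction heB)
      rwa [← Finset.sdiff_insert_of_notMem he, ← Finset.insert_sdiff_insert,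
        Finset.insert_erase heB] at h
    · simpa only [hsplit B heB] using hd B (hB.to_deletion heB)

theorem basisIntersection_insert_eq_of_loop (hΔ : IsMatroid Δ) (hl : ¬ Δ {e})
    (hB₁ : IsBasisOf Δ B₁) (heB₁ : e ∉ B₁) (he : e ∉ E)
    (ih : basisIntersection f E (insert e D) (deletion Δ e) =
      nonfaceIdeal f E (deletion Δ e) ⊔ Ideal.span (f '' ↑(insert e D))) :
    basisIntersection f (insert e E) D Δ =
      nonfaceIdeal f (insert e E) Δ ⊔ Ideal.span (f '' ↑D) := by
  have hnone : ∀ B, ¬ IsBasisOf (contraction Δ e) B := fun B hB =>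
    hl (hΔ.2.1 _ _ hB.1.2 (Finset.singleton_subset_iff.2 (Finset.mem_insert_self e B)))
  rw [basisIntersection_insert_eq_inf f hΔ hB₁ heB₁ he, basisIntersection_eq_top f hnone,
    top_inf_eq, ih, nonfaceIdeal_eq_deletion_sup_of_loop f he hl, span_image_insert, sup_assoc]

theorem basisIntersection_insert_eq_of_not_loop {m : ℕ} (hreg : SubsetsRegular f m)
    (hΔ : IsMatroidOn Δ (insert e E) c) (hl : Δ {e}) (hB₁ : IsBasisOf Δ B₁) (heB₁ : e ∉ B₁)
    (hED : Disjoint E D) (he : e ∉ E) (heD : e ∉ D) (hm : c + D.card < m)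
    (ihc : basisIntersection f E D (contraction Δ e) =
      nonfaceIdeal f E (contraction Δ e) ⊔ Ideal.span (f '' ↑D))
    (ihd : basisIntersection f E (insert e D) (deletion Δ e) =
      nonfaceIdeal f E (deletion Δ e) ⊔ Ideal.span (f '' ↑(insert e D))) :
    basisIntersection f (insert e E) D Δ =
      nonfaceIdeal f (insert e E) Δ ⊔ Ideal.span (f '' ↑D) := by
  have hcancel : ∀ a, f e * a ∈ nonfaceIdeal f E (contraction Δ e) ⊔ Ideal.span (f '' ↑D) →
      a ∈ nonfaceIdeal f E (contraction Δ e) ⊔ Ideal.span (f '' ↑D) := by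
    rw [← ihc]
    exact fun a => mem_of_mul_mem_basisIntersection f hreg (hΔ.contract he hl) hED he heD hm
  rw [basisIntersection_insert_eq_inf f hΔ.isMatroid hB₁ heB₁ he, ihc, ihd, span_image_insert,
    ← sup_assoc]
  exact inf_sup_eq_of_mul_mem_cancel (nonfaceIdeal_deletion_le f he)
    (nonfaceIdeal_le_contraction f hΔ.isMatroid he) (nonfaceIdeal_le_deletion_sup f)
    (fun w hw => mul_mem_nonfaceIdeal_of_mem_contraction f he hw) hcancel

/-- The generators `f i, i ∈ D`, record the elements deleted so far; the bound `c + |D| < m`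
keeps every specialized prime, extended by one more `f e`, a regular sequence. -/
theorem basisIntersection_eq_nonfaceIdeal_sup {m : ℕ} (hreg : SubsetsRegular f m)
    (E : Finset (Fin s)) :
    ∀ {D c Δ}, Disjoint E D → IsMatroidOn Δ E c → c + D.card < m →
      basisIntersection f E D Δ = nonfaceIdeal f E Δ ⊔ Ideal.span (f '' ↑D) := by
  induction E using Finset.induction_on with
  | empty => exact fun _ hΔ _ => basisIntersection_empty f hΔ
  | insert e E he ih =>
    intro D c Δ hED hΔ hm
    obtain ⟨heD, hED⟩ := Finset.disjoint_insert_left.1 hED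
    obtain ⟨B₀, hB₀, -⟩ := exists_isBasisOf_superset hΔ.isMatroid.1
    by_cases hco : ∀ B, IsBasisOf Δ B → e ∈ B
    · have hl : Δ {e} :=
        hΔ.isMatroid.2.1 B₀ {e} hB₀.1 (Finset.singleton_subset_iff.2 (hco B₀ hB₀))
      rw [basisIntersection_insert_eq_contraction f he hco, ih hED (hΔ.contract he hl) hm,
        nonfaceIdeal_eq_contraction_of_coloop f hΔ.isMatroid he hco]
    push Not at hco
    obtain ⟨B₁, hB₁, heB₁⟩ := hco
    obtain ⟨c', rfl, hdel⟩ := hΔ.delete he hB₁ heB₁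
    have ihd := ih (Finset.disjoint_insert_right.2 ⟨he, hED⟩) hdel
      (by rw [Finset.card_insert_of_notMem heD]; omega)
    by_cases hl : Δ {e}
    · exact basisIntersection_insert_eq_of_not_loop f hreg hΔ hl hB₁ heB₁ hED he heD hm
        (ih hED (hΔ.contract he hl) hm) ihd
    · exact basisIntersection_insert_eq_of_loop f hΔ.isMatroid hl hB₁ heB₁ he ihd

theorem map_stanleyReisnerIdeal {k : Type} [Field k] [Algebra k A] (Δ : Finset (Fin s) → Prop) :
    Ideal.map (MvPolynomial.aeval (R := k) f).toRingHom (stanleyReisnerIdeal k Δ) =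
      nonfaceIdeal f Finset.univ Δ := by
  simp only [stanleyReisnerIdeal, nonfaceIdeal, Ideal.map_span, Set.image_image,
    AlgHom.toRingHom_eq_coe, RingHom.coe_coe, map_prod, MvPolynomial.aeval_X,
    Finset.subset_univ, true_and]

end Ideals

theorem statement10_general (k : Type) [Field k] (s c n : ℕ)
    (Δ : Finset (Fin s) → Prop) (hmat : IsMatroid Δ)
    (hdim : ∀ F, IsBasisOf Δ F → F.card = s - c)
    (f : Fin s → MvPolynomial (Fin (n + 1)) k)
    (hreg : SubsetsRegular f (c + 1)) :
    Ideal.map (MvPolynomial.aeval (R := k) f).toRingHom (stanleyReisnerIdeal k Δ)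
      = ⨅ F ∈ {F : Finset (Fin s) | IsBasisOf Δ F}, Ideal.span (f '' ↑(Fᶜ)) := by
  -- the corank is `s - (s - c)`, not `c`: nothing prevents `c > s`
  have hΔ : IsMatroidOn Δ Finset.univ (s - (s - c)) :=
    ⟨hmat, fun F _ => Finset.subset_univ F, fun B hB => by
      rw [hdim B hB, Finset.card_univ, Fintype.card_fin]; omega⟩
  have h := basisIntersection_eq_nonfaceIdeal_sup f hreg Finset.univ
    (Finset.disjoint_empty_right _) hΔ (by rw [Finset.card_empty]; omega)
  rw [Finset.coe_empty, Set.image_empty, Ideal.span_empty, sup_bot_eq] at h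
  rw [map_stanleyReisnerIdeal, ← h, basisIntersection]
  simp only [Finset.union_empty, Finset.compl_eq_univ_sdiff]

theorem statement10 (k : Type) [Field k] [Infinite k] (s c n : ℕ) (hcs : c ≤ s) (hcn : c ≤ n)
    (Δ : Finset (Fin s) → Prop) (hmat : IsMatroid Δ)
    (hdim : ∀ F, IsBasisOf Δ F → F.card = s - c)
    (f : Fin s → MvPolynomial (Fin (n + 1)) k) (d : Fin s → ℕ)
    (hdeg : ∀ i, (f i).IsHomogeneous (d i))
    (hreg : SubsetsRegular f (c + 1)) :
    Ideal.map (MvPolynomial.aeval (R := k) f).toRingHom (stanleyReisnerIdeal k Δ)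
      = ⨅ F ∈ {F : Finset (Fin s) | IsBasisOf Δ F}, Ideal.span (f '' ↑(Fᶜ)) :=
  statement10_general k s c n Δ hmat hdim f hreg
end
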